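/- Let ε > 0, assume D_f > 0, D_g > 0, R > 0, choose ρ = ε/(4 D_f), μ = ε/(4 D_g), and let p ∈ ℝ^m satisfy θ(p) + v(D) ≤ ε, ‖A x_{ρ,p} − x_{μ,p}‖ ≤ 2ε/R, and ‖p‖ ≤ 2√3·R. Then |f(x_{ρ,p}) + g(x_{μ,p}) − v(D)| ≤ 2(1 + 2√3)·ε; in particular, by weak duality, f(x_{ρ,p}) + g(x_{μ,p}) ≤ v(P) + 2(1 + 2√3)·ε. -/

import Mathlib

open scoped RealInnerProductSpace
noncomputable section

/-- `Euc k` is the Euclidean space `ℝ^k`. -/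
abbrev Euc (k : ℕ) := EuclideanSpace ℝ (Fin k)

/-- `f` is proper: nowhere `-∞` and somewhere finite. -/
def IsProperFn {k : ℕ} (f : Euc k → EReal) : Prop :=
  (∀ x, f x ≠ ⊥) ∧ ∃ x, f x ≠ ⊤

/-- Convexity of an extended-real-valued function. -/
def IsConvexFn {k : ℕ} (f : Euc k → EReal) : Prop :=
  ∀ x y : Euc k, ∀ t : ℝ, 0 < t → t < 1 →
    f (t • x + (1 - t) • y) ≤ (t : EReal) * f x + ((1 - t : ℝ) : EReal) * f y

/-- `f` is proper, convex, lower semicontinuous with bounded effective domain. -/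
def NiceFn {k : ℕ} (f : Euc k → EReal) : Prop :=
  IsProperFn f ∧ IsConvexFn f ∧ LowerSemicontinuous f ∧
    Bornology.IsBounded {x | f x ≠ ⊤}

/-- The Fenchel conjugate `f*(q) = sup_x {⟨q,x⟩ - f(x)}` (real-valued). -/
noncomputable def conjFn {k : ℕ} (f : Euc k → EReal) (q : Euc k) : ℝ :=
  (⨆ x, ((⟪q, x⟫ : ℝ) : EReal) - f x).toReal

/-- The Fenchel conjugate as an extended real. -/
noncomputable def conjE {k : ℕ} (f : Euc k → EReal) (q : Euc k) : EReal :=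
  ⨆ x, ((⟪q, x⟫ : ℝ) : EReal) - f x

/-- The smoothed conjugate `f_r*(q) = sup_x {⟨q,x⟩ - f(x) - (r/2)‖x‖²}`. -/
noncomputable def conjSm {k : ℕ} (f : Euc k → EReal) (r : ℝ) (q : Euc k) : ℝ :=
  (⨆ x, ((⟪q, x⟫ - r / 2 * ‖x‖ ^ 2 : ℝ) : EReal) - f x).toReal

/-- The proximal objective `x ↦ f(x) + (r/2)‖u - x‖²`. -/
noncomputable def proxObj {k : ℕ} (f : Euc k → EReal) (r : ℝ) (u x : Euc k) : EReal :=
  f x + ((r / 2 * ‖u - x‖ ^ 2 : ℝ) : EReal)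

/-- `D_f = sup {‖x‖²/2 : x ∈ dom f}`. -/
noncomputable def Dsup {k : ℕ} (f : Euc k → EReal) : ℝ :=
  sSup ((fun x : Euc k => ‖x‖ ^ 2 / 2) '' {x | f x ≠ ⊤})

/-- `x0` is the unique global minimizer of `h`. -/
def UniqMin {α : Type*} {β : Type*} [Preorder β] (h : α → β) (x0 : α) : Prop :=
  (∀ x, h x0 ≤ h x) ∧ ∀ x, (∀ y, h x ≤ h y) → x = x0

/-- The dual objective `θ(p) = f*(A*p) + g*(-p)`. -/
noncomputable def theta {n m : ℕ} (f : Euc n → EReal) (g : Euc m → EReal)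
    (A : Euc n →L[ℝ] Euc m) (p : Euc m) : ℝ :=
  conjFn f (ContinuousLinearMap.adjoint A p) + conjFn g (-p)

/-- The singly smoothed dual objective `θ_{ρ,μ}(p) = f_ρ*(A*p) + g_μ*(-p)`. -/
noncomputable def thetaSm {n m : ℕ} (f : Euc n → EReal) (g : Euc m → EReal)
    (A : Euc n →L[ℝ] Euc m) (r s : ℝ) (p : Euc m) : ℝ :=
  conjSm f r (ContinuousLinearMap.adjoint A p) + conjSm g s (-p)

/-- The doubly smoothed dual objective `θ_{ρ,μ,κ}(p) = θ_{ρ,μ}(p) + (κ/2)‖p‖²`. -/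
noncomputable def thetaSmK {n m : ℕ} (f : Euc n → EReal) (g : Euc m → EReal)
    (A : Euc n →L[ℝ] Euc m) (r s c : ℝ) (p : Euc m) : ℝ :=
  thetaSm f g A r s p + c / 2 * ‖p‖ ^ 2

/-- The optimal value of the primal problem `v(P) = inf {f(x) + g(Ax)}`. -/
noncomputable def vPrimal {n m : ℕ} (f : Euc n → EReal) (g : Euc m → EReal)
    (A : Euc n →L[ℝ] Euc m) : EReal := ⨅ x, f x + g (A x)

/-- The optimal value of the dual problem `v(D) = -inf θ`. -/
noncomputable def vDual {n m : ℕ} (f : Euc n → EReal) (g : Euc m → EReal)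
    (A : Euc n →L[ℝ] Euc m) : ℝ := -(⨅ p, theta f g A p)


/-! The prox point `x_{ρ,p}` maximizes the smoothed conjugate integrand, whose maximum lies
within `ρ D_f` of `f*(A*p)`; this pins `f(x_{ρ,p})` to within `ε/4` of `⟪p, A x_{ρ,p}⟫ - f*(A*p)`,
and likewise for `g`. Adding the two estimates, the gap `⟪p, A x_{ρ,p} - x_{μ,p}⟫` is at most
`‖p‖ ‖A x_{ρ,p} - x_{μ,p}‖ ≤ 4√3 ε`, and `0 ≤ θ(p) + v(D) ≤ ε` finishes the estimate. -/

section Conjugate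

variable {k : ℕ} {f : Euc k → EReal}

lemma norm_sq_div_two_le_Dsup (hbdd : Bornology.IsBounded {x | f x ≠ ⊤}) {x : Euc k}
    (hx : f x ≠ ⊤) : ‖x‖ ^ 2 / 2 ≤ Dsup f := by
  obtain ⟨M, hM⟩ := hbdd.exists_norm_le
  refine le_csSup ⟨M ^ 2 / 2, ?_⟩ ⟨x, hx, rfl⟩
  rintro _ ⟨y, hy, rfl⟩
  have := hM y hy
  have := norm_nonneg y
  nlinarith

lemma inner_sub_conjFn_le {q : Euc k} (hq : conjE f q = conjFn f q) (x : Euc k) :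
    ((⟪q, x⟫ - conjFn f q : ℝ) : EReal) ≤ f x := by
  have h : ((⟪q, x⟫ : ℝ) : EReal) - f x ≤ conjFn f q :=
    hq ▸ le_iSup (fun y => ((⟪q, y⟫ : ℝ) : EReal) - f y) x
  rw [EReal.sub_le_iff_le_add (.inr (EReal.coe_ne_top _)) (.inr (EReal.coe_ne_bot _))] at h
  exact EReal.sub_le_of_le_add' h

lemma proxObj_ne_top_of_isMin (hfin : ∃ x, f x ≠ ⊤) {r : ℝ} {u xs : Euc k}
    (hmin : ∀ x, proxObj f r u xs ≤ proxObj f r u x) : f xs ≠ ⊤ := by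
  obtain ⟨x₀, hx₀⟩ := hfin
  intro htop
  have hlt : proxObj f r u x₀ < ⊤ := EReal.add_lt_top hx₀ (EReal.coe_ne_top _)
  exact (hmin x₀).trans_lt hlt |>.ne (by rw [proxObj, htop, EReal.top_add_coe])

/-- Completing the square around `r⁻¹ • q`. -/
lemma inner_sub_half_sq_sub_eq_sub_proxObj {r : ℝ} (hr : r ≠ 0) (q x : Euc k) :
    ((⟪q, x⟫ - r / 2 * ‖x‖ ^ 2 : ℝ) : EReal) - f x
      = ((r / 2 * ‖r⁻¹ • q‖ ^ 2 : ℝ) : EReal) - proxObj f r (r⁻¹ • q) x := by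
  have hsq : ⟪q, x⟫ - r / 2 * ‖x‖ ^ 2 = r / 2 * ‖r⁻¹ • q‖ ^ 2 - r / 2 * ‖r⁻¹ • q - x‖ ^ 2 := by
    rw [norm_sub_sq_real, real_inner_smul_left]
    field_simp
    ring
  rw [hsq, proxObj]
  induction f x with
  | bot => rw [EReal.coe_sub_bot, EReal.bot_add, EReal.coe_sub_bot]
  | top => rw [EReal.sub_top, EReal.top_add_coe, EReal.sub_top]
  | coe a => norm_cast; ring

lemma inner_sub_sub_le_of_isMin_proxObj {r : ℝ} (hr : r ≠ 0) {q xs : Euc k}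
    (hmin : ∀ x, proxObj f r (r⁻¹ • q) xs ≤ proxObj f r (r⁻¹ • q) x) (x : Euc k) :
    ((⟪q, x⟫ - r / 2 * ‖x‖ ^ 2 : ℝ) : EReal) - f x
      ≤ ((⟪q, xs⟫ - r / 2 * ‖xs‖ ^ 2 : ℝ) : EReal) - f xs := by
  rw [inner_sub_half_sq_sub_eq_sub_proxObj hr, inner_sub_half_sq_sub_eq_sub_proxObj hr]
  exact EReal.sub_le_sub le_rfl (hmin x)

lemma conjFn_bounds_of_isMin_proxObj (hf : IsProperFn f)
    (hbdd : Bornology.IsBounded {x | f x ≠ ⊤}) {r : ℝ} (hr : 0 < r) {q xs : Euc k}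
    (hmin : ∀ x, proxObj f r (r⁻¹ • q) xs ≤ proxObj f r (r⁻¹ • q) x) :
    ∃ a : ℝ, f xs = a ∧ conjE f q = conjFn f q ∧
      ⟪q, xs⟫ - a ≤ conjFn f q ∧ conjFn f q ≤ ⟪q, xs⟫ - a + r * Dsup f := by
  obtain ⟨hbot, hfin⟩ := hf
  have hxs := proxObj_ne_top_of_isMin hfin hmin
  set a := (f xs).toReal
  have hfa : f xs = a := (EReal.coe_toReal hxs (hbot xs)).symm
  have hlow : ((⟪q, xs⟫ - a : ℝ) : EReal) ≤ conjE f q := by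
    rw [EReal.coe_sub, ← hfa]
    exact le_iSup (fun x => ((⟪q, x⟫ : ℝ) : EReal) - f x) xs
  have hup : conjE f q ≤ ((⟪q, xs⟫ - a + r * Dsup f : ℝ) : EReal) := by
    refine iSup_le fun x => ?_
    by_cases hx : f x = ⊤
    · simp [hx]
    have hmax := inner_sub_sub_le_of_isMin_proxObj hr.ne' hmin x
    have hD := norm_sq_div_two_le_Dsup hbdd hx
    rw [hfa, ← EReal.coe_toReal hx (hbot x)] at hmax
    rw [← EReal.coe_toReal hx (hbot x)]
    norm_cast at hmax ⊢
    nlinarith [norm_nonneg xs]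
  have hfin : conjE f q = conjFn f q :=
    (EReal.coe_toReal (ne_top_of_le_ne_top (EReal.coe_ne_top _) hup)
      (ne_bot_of_le_ne_bot (EReal.coe_ne_bot _) hlow)).symm
  rw [hfin] at hlow hup
  exact ⟨a, hfa, hfin, EReal.coe_le_coe_iff.mp hlow, EReal.coe_le_coe_iff.mp hup⟩

end Conjugate

section Duality

variable {n m : ℕ} {f : Euc n → EReal} {g : Euc m → EReal} {A : Euc n →L[ℝ] Euc m}

lemma vPrimal_ne_top (h : ∃ x, f x ≠ ⊤ ∧ g (A x) ≠ ⊤) : vPrimal f g A ≠ ⊤ := by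
  obtain ⟨x, hfx, hgx⟩ := h
  exact ne_top_of_le_ne_top (EReal.add_lt_top hfx hgx).ne (iInf_le _ x)

lemma neg_theta_le_vPrimal {p : Euc m}
    (hcf : conjE f (ContinuousLinearMap.adjoint A p) = conjFn f (ContinuousLinearMap.adjoint A p))
    (hcg : conjE g (-p) = conjFn g (-p)) :
    ((-theta f g A p : ℝ) : EReal) ≤ vPrimal f g A := by
  refine le_iInf fun x => ?_
  have hsum := add_le_add (inner_sub_conjFn_le hcf x) (inner_sub_conjFn_le hcg (A x))
  rw [ContinuousLinearMap.adjoint_inner_left, inner_neg_left, ← EReal.coe_add] at hsum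
  convert hsum using 2
  rw [theta]
  ring

lemma theta_bddBelow
    (hcf : ∀ p, conjE f (ContinuousLinearMap.adjoint A p) = conjFn f (ContinuousLinearMap.adjoint A p))
    (hcg : ∀ p, conjE g (-p) = conjFn g (-p)) (hP : vPrimal f g A ≠ ⊤) :
    BddBelow (Set.range (theta f g A)) := by
  refine ⟨-(vPrimal f g A).toReal, ?_⟩
  rintro _ ⟨p, rfl⟩
  have := EReal.toReal_le_toReal (neg_theta_le_vPrimal (hcf p) (hcg p)) (EReal.coe_ne_bot _) hP
  rw [EReal.toReal_coe] at this
  linarith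

lemma vDual_le_vPrimal
    (hcf : ∀ p, conjE f (ContinuousLinearMap.adjoint A p) = conjFn f (ContinuousLinearMap.adjoint A p))
    (hcg : ∀ p, conjE g (-p) = conjFn g (-p)) : (vDual f g A : EReal) ≤ vPrimal f g A := by
  by_cases hP : vPrimal f g A = ⊤
  · simp [hP]
  have hbot : vPrimal f g A ≠ ⊥ :=
    ne_bot_of_le_ne_bot (EReal.coe_ne_bot _) (neg_theta_le_vPrimal (hcf 0) (hcg 0))
  rw [← EReal.coe_toReal hP hbot, EReal.coe_le_coe_iff, vDual, neg_le]
  refine le_ciInf fun p => ?_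
  have := EReal.toReal_le_toReal (neg_theta_le_vPrimal (hcf p) (hcg p)) (EReal.coe_ne_bot _) hP
  rw [EReal.toReal_coe] at this
  linarith

end Duality

/-- Construction of an approximately optimal primal solution: if `θ(p) + v(D) ≤ ε`,
`‖A x_{ρ,p} - x_{μ,p}‖ ≤ 2ε/R` and `‖p‖ ≤ 2√3 R`, then
`|f(x_{ρ,p}) + g(x_{μ,p}) - v(D)| ≤ 2(1 + 2√3)ε`, and in particular, by weak duality,
`f(x_{ρ,p}) + g(x_{μ,p}) ≤ v(P) + 2(1 + 2√3)ε`. -/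
theorem stmt16 (n m : ℕ) (f : Euc n → EReal) (g : Euc m → EReal)
    (A : Euc n →L[ℝ] Euc m) (hf : NiceFn f) (hg : NiceFn g)
    (hfeas : ∃ x, f x ≠ ⊤ ∧ g (A x) ≠ ⊤)
    (ε R : ℝ) (hε : 0 < ε) (hDf : 0 < Dsup f) (hDg : 0 < Dsup g) (hR : 0 < R)
    (ρ μ : ℝ) (hρ : ρ = ε / (4 * Dsup f)) (hμ : μ = ε / (4 * Dsup g))
    (xρ : Euc m → Euc n) (xμ : Euc m → Euc m)
    (hxρ : ∀ p : Euc m,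
      UniqMin (proxObj f ρ (ρ⁻¹ • (ContinuousLinearMap.adjoint A p))) (xρ p))
    (hxμ : ∀ p : Euc m, UniqMin (proxObj g μ (-(μ⁻¹ • p))) (xμ p))
    (p : Euc m)
    (h1 : theta f g A p + vDual f g A ≤ ε)
    (h2 : ‖A (xρ p) - xμ p‖ ≤ 2 * ε / R)
    (h3 : ‖p‖ ≤ 2 * Real.sqrt 3 * R) :
    ∃ a b : ℝ, f (xρ p) = (a : EReal) ∧ g (xμ p) = (b : EReal) ∧
      |a + b - vDual f g A| ≤ 2 * (1 + 2 * Real.sqrt 3) * ε ∧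
      ((a + b : ℝ) : EReal)
        ≤ vPrimal f g A + ((2 * (1 + 2 * Real.sqrt 3) * ε : ℝ) : EReal) := by
  have hρ0 : 0 < ρ := by rw [hρ]; positivity
  have hμ0 : 0 < μ := by rw [hμ]; positivity
  have hbf p' := conjFn_bounds_of_isMin_proxObj hf.1 hf.2.2.2 hρ0 (hxρ p').1
  have hbg p' := conjFn_bounds_of_isMin_proxObj hg.1 hg.2.2.2 hμ0 (q := -p')
    (by simpa only [smul_neg] using (hxμ p').1)
  have hcf p' := (hbf p').choose_spec.2.1
  have hcg p' := (hbg p').choose_spec.2.1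
  obtain ⟨a, hfa, -, hfa₁, hfa₂⟩ := hbf p
  obtain ⟨b, hgb, -, hgb₁, hgb₂⟩ := hbg p
  have hθ : -vDual f g A ≤ theta f g A p := by
    rw [vDual, neg_neg]
    exact ciInf_le (theta_bddBelow hcf hcg (vPrimal_ne_top hfeas)) p
  have hgap : |⟪p, A (xρ p) - xμ p⟫| ≤ 4 * Real.sqrt 3 * ε :=
    calc |⟪p, A (xρ p) - xμ p⟫| ≤ ‖p‖ * ‖A (xρ p) - xμ p‖ := abs_real_inner_le_norm _ _
      _ ≤ (2 * Real.sqrt 3 * R) * (2 * ε / R) := by gcongr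
      _ = 4 * Real.sqrt 3 * ε := by field_simp; ring
  have hbound : |a + b - vDual f g A| ≤ 2 * (1 + 2 * Real.sqrt 3) * ε := by
    have hρD : ρ * Dsup f = ε / 4 := by rw [hρ]; field_simp
    have hμD : μ * Dsup g = ε / 4 := by rw [hμ]; field_simp
    have := ContinuousLinearMap.adjoint_inner_left A (xρ p) p
    have := inner_neg_left (𝕜 := ℝ) p (xμ p)
    have := inner_sub_right (𝕜 := ℝ) p (A (xρ p)) (xμ p)
    rw [theta] at h1 hθ
    rw [abs_le] at hgap ⊢
    constructor <;> linarith
  refine ⟨a, b, hfa, hgb, hbound, ?_⟩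
  calc ((a + b : ℝ) : EReal) ≤ ((vDual f g A + 2 * (1 + 2 * Real.sqrt 3) * ε : ℝ) : EReal) := by
        exact_mod_cast by linarith [(abs_le.mp hbound).2]
    _ ≤ vPrimal f g A + ((2 * (1 + 2 * Real.sqrt 3) * ε : ℝ) : EReal) := by
        rw [EReal.coe_add]
        gcongr
        exact vDual_le_vPrimal hcf hcg
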